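/- Let F be a field and G an F*-graph (not necessarily σ-symmetric) with adjacency matrix M on vertex set V. Then the bi-cut-rank function bicutrk(X) := rk(M[X, V\X]) + rk(M[V\X, X]) is symmetric and submodular: bicutrk(X) = bicutrk(V\X) for all X, and bicutrk(X∪Y) + bicutrk(X∩Y) ≤ bicutrk(X) + bicutrk(Y) for all X, Y ⊆ V. -/

import Mathlib

noncomputable def rkSub {V W F : Type*} [Fintype V] [Fintype W] [Field F]
    (M : Matrix V W F) (X : Finset V) (Y : Finset W) : ℕ :=
  (M.submatrix (fun i : X => (i : V)) (fun j : Y => (j : W))).rank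

/-!
Restricting vectors to the rows `A` maps the column span of `M[V, B]` onto the column span of
`M[A, B]`, with kernel the vectors vanishing on `A`. Rank–nullity therefore gives
`rk M[A, B] + |V \ A| = dim (span (columns of M in B) + {v | v = 0 on A})`.
For `B = V \ A` the subspace on the right grows under complements of unions and shrinks under
complements of intersections, so the submodularity of the cut-rank `A ↦ rk M[A, V \ A]` is the
modular law `dim (P ⊔ Q) + dim (P ⊓ Q) = dim P + dim Q`. The bi-cut-rank is the sum of the
cut-ranks of `M` and `Mᵀ`, and its symmetry is the commutativity of addition.
-/

open Module Submodule LinearMap Finset Matrix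

theorem LinearMap.finrank_map_add_finrank_ker {K E E' : Type*} [DivisionRing K]
    [AddCommGroup E] [Module K E] [FiniteDimensional K E] [AddCommGroup E'] [Module K E']
    (f : E →ₗ[K] E') (W : Submodule K E) :
    finrank K (W.map f) + finrank K (ker f) = finrank K ↥(W ⊔ ker f) := by
  have hmap : (W ⊔ ker f).map f = W.map f := by
    rw [Submodule.map_sup, le_ker_iff_map.1 le_rfl, sup_bot_eq]
  have hker : finrank K (ker (f.domRestrict (W ⊔ ker f))) = finrank K (ker f) := by
    rw [ker_domRestrict]
    exact (comapSubtypeEquivOfLe le_sup_right).finrank_eq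
  rw [← hmap, ← hker, ← range_domRestrict, finrank_range_add_finrank_ker]

section Restriction

variable {F V : Type*} [Field F]

theorem LinearMap.mem_ker_funLeft_finset {A : Finset V} {v : V → F} :
    v ∈ ker (funLeft F F ((↑) : A → V)) ↔ ∀ i ∈ A, v i = 0 := by
  simp [funext_iff, funLeft]

theorem LinearMap.antitone_ker_funLeft_finset :
    Antitone fun A : Finset V => ker (funLeft F F ((↑) : A → V)) := fun _ _ h _ hv =>
  mem_ker_funLeft_finset.2 fun i hi => mem_ker_funLeft_finset.1 hv i (h hi)

theorem LinearMap.ker_funLeft_finset_inter_le [DecidableEq V] (A B : Finset V) :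
    ker (funLeft F F ((↑) : ↥(A ∩ B) → V)) ≤
      ker (funLeft F F ((↑) : A → V)) ⊔ ker (funLeft F F ((↑) : B → V)) := by
  intro v hv
  rw [mem_ker_funLeft_finset] at hv
  have hsplit : v = (fun i => if i ∈ A then 0 else v i) + (fun i => if i ∈ A then v i else 0) := by
    ext i
    by_cases hi : i ∈ A <;> simp [hi]
  rw [hsplit]
  refine add_mem_sup (mem_ker_funLeft_finset.2 fun i hi => if_pos hi)
    (mem_ker_funLeft_finset.2 fun i hi => ?_)
  split_ifs with hiA
  · exact hv i (mem_inter.2 ⟨hiA, hi⟩)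
  · rfl

theorem LinearMap.finrank_ker_funLeft_finset [Fintype V] [DecidableEq V] (A : Finset V) :
    finrank F (ker (funLeft F F ((↑) : A → V))) = #Aᶜ := by
  have h := finrank_range_add_finrank_ker (funLeft F F ((↑) : A → V))
  rw [range_eq_top.2 (funLeft_surjective_of_injective _ _ _ Subtype.val_injective),
    finrank_top, finrank_fintype_fun_eq_card, finrank_fintype_fun_eq_card,
    Fintype.card_coe] at h
  rw [card_compl]
  omega

end Restriction

section CutRank

variable {F V W : Type*} [Field F] [Fintype V] [Fintype W]

theorem rkSub_eq_finrank_map_span_col (M : Matrix V W F) (A : Finset V) (B : Finset W) :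
    rkSub M A B = finrank F ((span F (M.col '' B)).map (funLeft F F ((↑) : A → V))) := by
  have hcols : Set.range (M.submatrix ((↑) : A → V) ((↑) : B → W)).col =
      funLeft F F ((↑) : A → V) '' (M.col '' B) := by
    ext x
    constructor
    · rintro ⟨j, rfl⟩
      exact ⟨M.col j, ⟨j, j.2, rfl⟩, rfl⟩
    · rintro ⟨_, ⟨j, hj, rfl⟩, rfl⟩
      exact ⟨⟨j, hj⟩, rfl⟩
  rw [rkSub, rank_eq_finrank_span_cols, hcols, Submodule.map_span]

theorem rkSub_add_card_compl [DecidableEq V] (M : Matrix V W F) (A : Finset V) (B : Finset W) :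
    rkSub M A B + #Aᶜ =
      finrank F ↥(span F (M.col '' B) ⊔ ker (funLeft F F ((↑) : A → V))) := by
  rw [rkSub_eq_finrank_map_span_col, ← finrank_ker_funLeft_finset (F := F) A,
    finrank_map_add_finrank_ker]

theorem rkSub_transpose (M : Matrix V W F) (A : Finset W) (B : Finset V) :
    rkSub Mᵀ A B = rkSub M B A := by
  rw [rkSub, rkSub, ← transpose_submatrix, Matrix.rank_transpose]

theorem rkSub_compl_submodular [DecidableEq V] (M : Matrix V V F) (X Y : Finset V) :
    rkSub M (X ∪ Y) (X ∪ Y)ᶜ + rkSub M (X ∩ Y) (X ∩ Y)ᶜ ≤ rkSub M X Xᶜ + rkSub M Y Yᶜ := by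
  set P : Finset V → Submodule F (V → F) :=
    fun A => span F (M.col '' ↑Aᶜ) ⊔ ker (funLeft F F ((↑) : A → V))
  have hrk (A : Finset V) : rkSub M A Aᶜ + #Aᶜ = finrank F (P A) := rkSub_add_card_compl M A Aᶜ
  have hinter : P (X ∩ Y) ≤ P X ⊔ P Y := by
    simp only [P]
    rw [compl_inter, coe_union, Set.image_union, span_union, sup_sup_sup_comm]
    exact sup_le_sup_left (ker_funLeft_finset_inter_le X Y) _
  have hunion : P (X ∪ Y) ≤ P X ⊓ P Y := by
    have hmono {A B : Finset V} (h : A ⊆ B) : P B ≤ P A :=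
      sup_le_sup (span_mono (Set.image_mono (coe_subset.2 (compl_subset_compl.2 h))))
        (antitone_ker_funLeft_finset h)
    exact le_inf (hmono subset_union_left) (hmono subset_union_right)
  have hcard : #Xᶜ + #Yᶜ = #(X ∪ Y)ᶜ + #(X ∩ Y)ᶜ := by
    rw [compl_inter, compl_union, card_inter_add_card_union]
  refine Nat.le_of_add_le_add_right (b := #Xᶜ + #Yᶜ) ?_
  calc rkSub M (X ∪ Y) (X ∪ Y)ᶜ + rkSub M (X ∩ Y) (X ∩ Y)ᶜ + (#Xᶜ + #Yᶜ)
      = finrank F (P (X ∪ Y)) + finrank F (P (X ∩ Y)) := by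
        rw [hcard, ← hrk, ← hrk]
        ring
    _ ≤ finrank F ↥(P X ⊓ P Y) + finrank F ↥(P X ⊔ P Y) :=
        add_le_add (finrank_mono hunion) (finrank_mono hinter)
    _ = finrank F (P X) + finrank F (P Y) := by
        rw [add_comm, finrank_sup_add_finrank_inf_eq]
    _ = rkSub M X Xᶜ + rkSub M Y Yᶜ + (#Xᶜ + #Yᶜ) := by
        rw [← hrk, ← hrk]
        ring

end CutRank

theorem bicutrank_symmetric_submodular_general {F V : Type*} [Field F] [Fintype V] [DecidableEq V]
    (M : Matrix V V F) :
    (∀ X : Finset V,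
      rkSub M X Xᶜ + rkSub M Xᶜ X = rkSub M Xᶜ (Xᶜ)ᶜ + rkSub M (Xᶜ)ᶜ Xᶜ) ∧
    (∀ X Y : Finset V,
      (rkSub M (X ∪ Y) (X ∪ Y)ᶜ + rkSub M (X ∪ Y)ᶜ (X ∪ Y)) +
      (rkSub M (X ∩ Y) (X ∩ Y)ᶜ + rkSub M (X ∩ Y)ᶜ (X ∩ Y))
        ≤ (rkSub M X Xᶜ + rkSub M Xᶜ X) + (rkSub M Y Yᶜ + rkSub M Yᶜ Y)) := by
  refine ⟨fun X => by rw [compl_compl, add_comm], fun X Y => ?_⟩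
  have hM := rkSub_compl_submodular M X Y
  have hMt := rkSub_compl_submodular Mᵀ X Y
  simp only [rkSub_transpose] at hMt
  omega

/-- The bi-cut-rank function `X ↦ rk M[X,Xᶜ] + rk M[Xᶜ,X]` is symmetric and submodular. -/
theorem bicutrank_symmetric_submodular {F V : Type*} [Field F] [Fintype V] [DecidableEq V]
    (M : Matrix V V F) (hdiag : ∀ z : V, M z z = 0) :
    (∀ X : Finset V,
      rkSub M X Xᶜ + rkSub M Xᶜ X = rkSub M Xᶜ (Xᶜ)ᶜ + rkSub M (Xᶜ)ᶜ Xᶜ) ∧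
    (∀ X Y : Finset V,
      (rkSub M (X ∪ Y) (X ∪ Y)ᶜ + rkSub M (X ∪ Y)ᶜ (X ∪ Y)) +
      (rkSub M (X ∩ Y) (X ∩ Y)ᶜ + rkSub M (X ∩ Y)ᶜ (X ∩ Y))
        ≤ (rkSub M X Xᶜ + rkSub M Xᶜ X) + (rkSub M Y Yᶜ + rkSub M Yᶜ Y)) :=
  bicutrank_symmetric_submodular_general M
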